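/- Consider the facility assignment instance on the real line with k+1 facilities, where the level-0 facility has capacity c_0 = 1 and is located at −ε (for ε > 0), the level-i facility for i = 1, …, k−1 is located at 2^i with capacity c_i = 1 + 2·3^(i−1), the level-k facility is located at 2^k with capacity 1, and where there is ℓ_0 = 1 agent at point 1 (level 0) and ℓ_i = 1 + 2·3^(i−1) agents at point 2^i (level i) for i = 1, …, k−1. If Serial Dictatorship is applied with an ordering of the agents that has the chain-of-levels property, then for each i = 0, 1, …, k−1 at least one agent of level i is assigned to the facility of level i+1; consequently the resulting social cost is at least 2^k − 1. -/

import Mathlib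

/-- A facility assignment instance: `n` agents with most-preferred points `A`,
`m` facilities at points `F` with capacities `c`. -/
structure FAInstance (X : Type*) (n m : ℕ) where
  A : Fin n → X
  F : Fin m → X
  c : Fin m → ℕ

/-- An assignment is valid if no facility receives more agents than its capacity. -/
def ValidAssignment {X : Type*} {n m : ℕ} (I : FAInstance X n m)
    (S : Fin n → Fin m) : Prop :=
  ∀ j : Fin m, (Finset.univ.filter (fun i => S i = j)).card ≤ I.c j

/-- The social cost of an assignment: the sum of agents' distances to their facilities. -/
noncomputable def socialCost {X : Type*} [MetricSpace X] {n m : ℕ}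
    (I : FAInstance X n m) (S : Fin n → Fin m) : ℝ :=
  ∑ i, dist (I.A i) (I.F (S i))

/-- The `g`-augmented instance: every capacity is multiplied by `g`. -/
def FAInstance.augment {X : Type*} {n m : ℕ} (I : FAInstance X n m) (g : ℕ) :
    FAInstance X n m :=
  ⟨I.A, I.F, fun j => g * I.c j⟩

/-- `S` is an outcome of Serial Dictatorship run with the ordering `σ`
(`σ t` is the agent served at time `t`): the assignment is valid, and each agent is
assigned to a facility at minimum distance among the facilities that still have
residual capacity when her turn comes. -/
def IsSDWithOrder {X : Type*} [MetricSpace X] {n m : ℕ} (I : FAInstance X n m)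
    (σ : Equiv.Perm (Fin n)) (S : Fin n → Fin m) : Prop :=
  ValidAssignment I S ∧
  ∀ t : Fin n, ∀ j : Fin m,
    (Finset.univ.filter (fun s : Fin n => s < t ∧ S (σ s) = j)).card < I.c j →
    dist (I.A (σ t)) (I.F (S (σ t))) ≤ dist (I.A (σ t)) (I.F j)

/-- `S` is an outcome of Serial Dictatorship for some ordering of the agents
and some tie-breaking. -/
def IsSDAssignment {X : Type*} [MetricSpace X] {n m : ℕ} (I : FAInstance X n m)
    (S : Fin n → Fin m) : Prop :=
  ∃ σ : Equiv.Perm (Fin n), IsSDWithOrder I σ S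
/-- The ordering `σ` (where `σ t` is the agent in position `t`) has the chain-of-levels
property for the level function `lvl`: for each level `i ≥ 1`, some agent of level `i`
appears after all agents of levels `0, …, i − 1`. -/
def ChainOfLevels {n k : ℕ} (lvl : Fin n → Fin k) (σ : Equiv.Perm (Fin n)) : Prop :=
  ∀ i : Fin k, 0 < (i : ℕ) →
    ∃ t : Fin n, lvl (σ t) = i ∧ ∀ s : Fin n, (lvl (σ s) : ℕ) < (i : ℕ) → s < t

instance {n k : ℕ} (lvl : Fin n → Fin k) (σ : Equiv.Perm (Fin n)) :
    Decidable (ChainOfLevels lvl σ) := by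
  unfold ChainOfLevels; infer_instance

/-! Every agent is served by her home facility, the one at her own point, or by the next one
up. An agent of level `r > 0` finds her home full only if it holds an agent of level `r - 1`
(it has exactly as many seats as there are agents of level `r`, one of whom is still waiting),
and that agent skipped a free seat at distance `0` only because facility `r - 1` was already
full; so facilities `1, …, r` are all full. Facility `r + 1` still has a free seat: otherwise
the agents served so far, all of level at most `r + 1` and missing both the current agent and
the later chain agent of level `r + 1`, would fill `1, …, r + 1`, which have only one seat fewer
than there are agents of levels `0, …, r + 1`. The same seat count shows that facilities
`1, …, i` cannot absorb all agents of levels `0, …, i`, so some agent of level `i` pays `2 ^ i`. -/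

open Finset

section SerialDictatorship

variable {X : Type*} {n m : ℕ} {I : FAInstance X n m} {σ : Equiv.Perm (Fin n)}
  {S : Fin n → Fin m}

def load (σ : Equiv.Perm (Fin n)) (S : Fin n → Fin m) (j : Fin m) (t : Fin n) : ℕ :=
  #{s | s < t ∧ S (σ s) = j}

theorem load_mono (j : Fin m) {t t' : Fin n} (h : t ≤ t') : load σ S j t ≤ load σ S j t' :=
  card_le_card fun s hs => by
    simp only [mem_filter, mem_univ, true_and] at hs ⊢
    exact ⟨hs.1.trans_le h, hs.2⟩

theorem sum_load (J : Finset (Fin m)) (t : Fin n) :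
    ∑ j ∈ J, load σ S j t = #{s | s < t ∧ S (σ s) ∈ J} := by
  rw [card_eq_sum_card_fiberwise (f := fun s => S (σ s)) (t := J)
    fun s hs => (mem_filter.1 hs).2.2]
  refine sum_congr rfl fun j hj => congrArg card ?_
  ext s
  simp only [mem_filter, mem_univ, true_and]
  constructor
  · rintro ⟨hst, rfl⟩; exact ⟨⟨hst, hj⟩, rfl⟩
  · rintro ⟨⟨hst, -⟩, rfl⟩; exact ⟨hst, rfl⟩

theorem ValidAssignment.card_le_sum_capacity (hS : ValidAssignment I S) (J : Finset (Fin m)) :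
    #{a | S a ∈ J} ≤ ∑ j ∈ J, I.c j := by
  rw [card_eq_sum_card_fiberwise (s := {a | S a ∈ J}) fun a ha => (mem_filter.1 ha).2]
  refine sum_le_sum fun j _ => (card_le_card fun a ha => ?_).trans (hS j)
  simp only [mem_filter, mem_univ, true_and] at ha ⊢
  exact ha.2

def facilitiesUpTo (m p : ℕ) : Finset (Fin m) :=
  {j | 0 < (j : ℕ) ∧ (j : ℕ) ≤ p}

def SaturatedUpTo (I : FAInstance X n m) (σ : Equiv.Perm (Fin n)) (S : Fin n → Fin m)
    (t : Fin n) (p : ℕ) : Prop :=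
  ∀ j : Fin m, 0 < (j : ℕ) → (j : ℕ) ≤ p → I.c j ≤ load σ S j t

theorem SaturatedUpTo.sum_capacity_le {t : Fin n} {p : ℕ} (h : SaturatedUpTo I σ S t p) :
    ∑ j ∈ facilitiesUpTo m p, I.c j ≤ #{s | s < t ∧ S (σ s) ∈ facilitiesUpTo m p} := by
  rw [← sum_load]
  refine sum_le_sum fun j hj => ?_
  simp only [facilitiesUpTo, mem_filter, mem_univ, true_and] at hj
  exact h j hj.1 hj.2

variable [MetricSpace X]

theorem IsSDWithOrder.load_lt_capacity (hS : IsSDWithOrder I σ S) (t : Fin n) :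
    load σ S (S (σ t)) t < I.c (S (σ t)) := by
  refine lt_of_lt_of_le ?_ (hS.1 (S (σ t)))
  calc load σ S (S (σ t)) t < #{s | S (σ s) = S (σ t)} :=
        card_lt_card ⟨fun s hs => by simp_all,
          fun h => by simpa using h (mem_filter.2 ⟨mem_univ t, rfl⟩)⟩
    _ ≤ #{a | S a = S (σ t)} :=
        card_le_card_of_injOn σ (fun s hs => by simpa using hs) σ.injective.injOn

theorem IsSDWithOrder.capacity_le_load (hS : IsSDWithOrder I σ S) {t : Fin n} {j : Fin m}
    (h : dist (I.A (σ t)) (I.F j) < dist (I.A (σ t)) (I.F (S (σ t)))) :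
    I.c j ≤ load σ S j t :=
  not_lt.1 fun hfree => h.not_ge (hS.2 t j hfree)

end SerialDictatorship

theorem le_add_one_of_abs_two_pow_sub_le {r j : ℕ} (h : |(2 : ℝ) ^ r - 2 ^ j| ≤ 2 ^ r) :
    j ≤ r + 1 := by
  by_contra! hj
  have h4 : (2 : ℝ) ^ (r + 2) ≤ 2 ^ j := pow_le_pow_right₀ one_le_two hj
  have habs : (2 : ℝ) ^ j - 2 ^ r ≤ |(2 : ℝ) ^ r - 2 ^ j| := by
    rw [abs_sub_comm]; exact le_abs_self _
  have hr : (0 : ℝ) < 2 ^ r := by positivity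
  rw [pow_add] at h4
  linarith

structure IsLevelInstance (k : ℕ) {n : ℕ} (lvl : Fin n → Fin k) (I : FAInstance ℝ n (k + 1)) :
    Prop where
  A_eq : ∀ a, I.A a = 2 ^ (lvl a : ℕ)
  F_zero_neg : I.F 0 < 0
  F_eq : ∀ j : Fin (k + 1), 0 < (j : ℕ) → I.F j = 2 ^ (j : ℕ)
  card_level_zero : #{a | (lvl a : ℕ) = 0} = 1
  c_eq_card : ∀ j : Fin (k + 1), 0 < (j : ℕ) → (j : ℕ) < k → I.c j = #{a | (lvl a : ℕ) = j}
  c_last_pos : 0 < I.c (Fin.last k)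

def HomeOrNext {n k : ℕ} (lvl : Fin n → Fin k) (S : Fin n → Fin (k + 1)) (a : Fin n) : Prop :=
  0 < (S a : ℕ) ∧ (lvl a : ℕ) ≤ S a ∧ (S a : ℕ) ≤ lvl a + 1

namespace IsLevelInstance

variable {k n : ℕ} {lvl : Fin n → Fin k} {I : FAInstance ℝ n (k + 1)}
  {σ : Equiv.Perm (Fin n)} {S : Fin n → Fin (k + 1)}

theorem two_pow_lvl_lt_dist_zero (hI : IsLevelInstance k lvl I) (a : Fin n) :
    2 ^ (lvl a : ℕ) < dist (I.A a) (I.F 0) := by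
  have h0 : (0 : ℝ) < 2 ^ (lvl a : ℕ) := by positivity
  rw [hI.A_eq, Real.dist_eq, abs_of_pos] <;> linarith [hI.F_zero_neg]

theorem dist_eq_abs (hI : IsLevelInstance k lvl I) (a : Fin n) {j : Fin (k + 1)}
    (hj : 0 < (j : ℕ)) : dist (I.A a) (I.F j) = |2 ^ (lvl a : ℕ) - 2 ^ (j : ℕ)| := by
  rw [hI.A_eq, hI.F_eq j hj, Real.dist_eq]

theorem dist_home (hI : IsLevelInstance k lvl I) (a : Fin n) (ha : 0 < (lvl a : ℕ)) :
    dist (I.A a) (I.F (lvl a).castSucc) = 0 := by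
  rw [hI.dist_eq_abs a (by simpa using ha), Fin.val_castSucc, sub_self, abs_zero]

theorem dist_next (hI : IsLevelInstance k lvl I) (a : Fin n) :
    dist (I.A a) (I.F (lvl a).succ) = 2 ^ (lvl a : ℕ) := by
  rw [hI.dist_eq_abs a (by simp), Fin.val_succ, pow_succ, abs_sub_comm,
    abs_of_nonneg (by linarith [pow_pos (two_pos : (0 : ℝ) < 2) (lvl a : ℕ)])]
  ring

theorem dist_pos_of_ne (hI : IsLevelInstance k lvl I) (a : Fin n) {j : Fin (k + 1)}
    (hj : (j : ℕ) ≠ lvl a) : 0 < dist (I.A a) (I.F j) := by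
  rcases Nat.eq_zero_or_pos (j : ℕ) with hj0 | hj0
  · obtain rfl : j = 0 := Fin.ext hj0
    exact (pow_pos two_pos _).trans (hI.two_pow_lvl_lt_dist_zero a)
  · rw [hI.dist_eq_abs a hj0, abs_pos, sub_ne_zero]
    exact fun h => hj ((pow_right_injective₀ two_pos (by norm_num)) h).symm

theorem pos_and_le_of_dist_le (hI : IsLevelInstance k lvl I) (a : Fin n) {j : Fin (k + 1)}
    (h : dist (I.A a) (I.F j) ≤ 2 ^ (lvl a : ℕ)) : 0 < (j : ℕ) ∧ (j : ℕ) ≤ lvl a + 1 := by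
  rcases Nat.eq_zero_or_pos (j : ℕ) with hj0 | hj0
  · obtain rfl : j = 0 := Fin.ext hj0
    exact absurd h (hI.two_pow_lvl_lt_dist_zero a).not_ge
  · exact ⟨hj0, le_add_one_of_abs_two_pow_sub_le (hI.dist_eq_abs a hj0 ▸ h)⟩

theorem card_level_le (hI : IsLevelInstance k lvl I) (p : ℕ) :
    #{a | (lvl a : ℕ) ≤ p} = #{a | 0 < (lvl a : ℕ) ∧ (lvl a : ℕ) ≤ p} + 1 := by
  rw [← hI.card_level_zero, ← card_union_of_disjoint (disjoint_filter.2 fun a _ h => by omega)]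
  congr 1
  ext a
  simp only [mem_filter, mem_univ, true_and, mem_union]
  omega

theorem sum_capacity (hI : IsLevelInstance k lvl I) {p : ℕ} (hp : p < k) :
    ∑ j ∈ facilitiesUpTo (k + 1) p, I.c j = #{a | 0 < (lvl a : ℕ) ∧ (lvl a : ℕ) ≤ p} := by
  rw [card_eq_sum_card_fiberwise (f := fun a => (lvl a).castSucc) (t := facilitiesUpTo (k + 1) p)
    fun a ha => by
      simp only [facilitiesUpTo, coe_filter, mem_univ, true_and, Set.mem_ofPred_eq,
        Fin.val_castSucc] at ha ⊢
      exact ha]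
  refine sum_congr rfl fun j hj => ?_
  simp only [facilitiesUpTo, mem_filter, mem_univ, true_and] at hj
  rw [hI.c_eq_card j hj.1 (by omega), filter_filter]
  congr 1
  ext a
  simp only [mem_filter, mem_univ, true_and, Fin.ext_iff, Fin.val_castSucc]
  omega

theorem exists_lower_of_capacity_le_load (hI : IsLevelInstance k lvl I) {t : Fin n}
    (ih : ∀ s < t, HomeOrNext lvl S (σ s)) {j : Fin (k + 1)} (hj0 : 0 < (j : ℕ))
    (hjk : (j : ℕ) < k) {x : Fin n} (hx : (lvl x : ℕ) = j) (hxj : ¬ (σ.symm x < t ∧ S x = j))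
    (hfull : I.c j ≤ load σ S j t) :
    ∃ s < t, S (σ s) = j ∧ (lvl (σ s) : ℕ) + 1 = j := by
  by_contra! hno
  have hmaps : Set.MapsTo σ ({s | s < t ∧ S (σ s) = j} : Finset (Fin n))
      (({a | (lvl a : ℕ) = j} : Finset (Fin n)).erase x) := by
    intro s hs
    simp only [coe_filter, mem_univ, true_and, Set.mem_ofPred_eq] at hs
    obtain ⟨hst, hSs⟩ := hs
    have hgood := ih s hst
    have hne := hno s hst hSs
    simp only [HomeOrNext, hSs] at hgood
    refine mem_erase.2 ⟨fun hsx => hxj ⟨?_, hsx ▸ hSs⟩, ?_⟩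
    · rwa [← hsx, Equiv.symm_apply_apply]
    · simp only [mem_filter, mem_univ, true_and]
      omega
  have hle := card_le_card_of_injOn σ hmaps σ.injective.injOn
  have hpos : 0 < #{a | (lvl a : ℕ) = j} := card_pos.2 ⟨x, by simpa using hx⟩
  rw [card_erase_of_mem (by simpa using hx)] at hle
  rw [hI.c_eq_card j hj0 hjk] at hfull
  unfold load at hfull
  omega

theorem saturatedUpTo_of_capacity_le_load (hI : IsLevelInstance k lvl I)
    (hS : IsSDWithOrder I σ S) {t : Fin n} (ih : ∀ s < t, HomeOrNext lvl S (σ s))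
    (j : Fin (k + 1)) (hjk : (j : ℕ) < k) (x : Fin n) (hx : (lvl x : ℕ) = j)
    (hxj : ¬ (σ.symm x < t ∧ S x = j)) (hfull : 0 < (j : ℕ) → I.c j ≤ load σ S j t) :
    SaturatedUpTo I σ S t j := by
  induction j using WellFoundedLT.induction generalizing x with
  | ind j IH =>
  rcases Nat.eq_zero_or_pos (j : ℕ) with hj0 | hj0
  · intro i hi hij
    omega
  obtain ⟨s, hst, hSs, hlvl⟩ :=
    hI.exists_lower_of_capacity_le_load ih hj0 hjk hx hxj (hfull hj0)
  -- when `σ s` was served its home facility was strictly closer than `j`, so it was full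
  have hhome (h0 : 0 < ((lvl (σ s)).castSucc : ℕ)) :
      I.c (lvl (σ s)).castSucc ≤ load σ S (lvl (σ s)).castSucc t := by
    refine (hS.capacity_le_load ?_).trans (load_mono _ hst.le)
    rw [hI.dist_home _ (by simpa using h0), hSs]
    exact hI.dist_pos_of_ne _ (by omega)
  have hsat := IH _ (by rw [Fin.lt_def, Fin.val_castSucc]; omega) (by simp) (σ s) rfl
    (by simp [hSs, Fin.ext_iff]; omega) hhome
  intro i hi hij
  rcases hij.lt_or_eq with h | h
  · exact hsat i hi (by simp; omega)
  · exact Fin.ext h ▸ hfull hj0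

theorem load_lt_capacity_succ (hI : IsLevelInstance k lvl I) (hchain : ChainOfLevels lvl σ)
    {t : Fin n} (ih : ∀ s < t, HomeOrNext lvl S (σ s))
    (hsat : SaturatedUpTo I σ S t (lvl (σ t))) :
    load σ S (lvl (σ t)).succ t < I.c (lvl (σ t)).succ := by
  by_contra! hfull
  obtain ⟨r, hr⟩ : ∃ r, (lvl (σ t) : ℕ) = r := ⟨_, rfl⟩
  rw [hr] at hsat
  have hsat' : SaturatedUpTo I σ S t (r + 1) := fun j hj0 hjr =>
    hjr.lt_or_eq.elim (fun h => hsat j hj0 (by omega))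
      fun h => (Fin.ext (by simp [h, hr]) : j = (lvl (σ t)).succ) ▸ hfull
  have hcap := hsat'.sum_capacity_le
  rcases Nat.lt_or_ge (r + 1) k with hrk | hrk
  · obtain ⟨t₁, ht₁, hlater⟩ := hchain ⟨r + 1, hrk⟩ (Nat.succ_pos r)
    have htt₁ : t < t₁ := hlater t (by simp [hr])
    have hmaps : Set.MapsTo σ
        ({s | s < t ∧ S (σ s) ∈ facilitiesUpTo (k + 1) (r + 1)} : Finset (Fin n))
        ((({a | (lvl a : ℕ) ≤ r + 1} : Finset (Fin n)).erase (σ t₁)).erase (σ t)) := by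
      intro s hs
      simp only [facilitiesUpTo, coe_filter, mem_filter, mem_univ, true_and,
        Set.mem_ofPred_eq] at hs
      obtain ⟨hst, -, hSs⟩ := hs
      have hgood := ih s hst
      rw [mem_coe]
      simp only [mem_erase, mem_filter, mem_univ, true_and, σ.injective.ne_iff]
      exact ⟨hst.ne, (hst.trans htt₁).ne, by unfold HomeOrNext at hgood; omega⟩
    have hle := card_le_card_of_injOn σ hmaps σ.injective.injOn
    rw [card_erase_of_mem (by simp [σ.injective.ne_iff, htt₁.ne, hr]),
      card_erase_of_mem (by simp [ht₁]), hI.card_level_le, ← hI.sum_capacity hrk] at hle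
    have hpos : 0 < ∑ j ∈ facilitiesUpTo (k + 1) (r + 1), I.c j := by
      rw [hI.sum_capacity hrk]
      exact card_pos.2 ⟨σ t₁, by simp [ht₁]⟩
    omega
  · -- the `n - 1` agents before `t` cannot fill the `n` seats of facilities `1, …, k`
    have hsplit :
        facilitiesUpTo (k + 1) (r + 1) = insert (Fin.last k) (facilitiesUpTo (k + 1) r) := by
      ext j
      simp only [facilitiesUpTo, mem_insert, mem_filter, mem_univ, true_and, Fin.ext_iff,
        Fin.val_last]
      omega
    have hall : #{a | (lvl a : ℕ) ≤ r} = n := by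
      rw [filter_true_of_mem fun a _ => by omega, card_univ, Fintype.card_fin]
    have hlt : #{s | s < t ∧ S (σ s) ∈ facilitiesUpTo (k + 1) (r + 1)} < n :=
      card_lt_univ_of_notMem (x := t) (by simp) |>.trans_eq (Fintype.card_fin n)
    have hsum : ∑ j ∈ facilitiesUpTo (k + 1) (r + 1), I.c j
        = #{a | 0 < (lvl a : ℕ) ∧ (lvl a : ℕ) ≤ r} + I.c (Fin.last k) := by
      rw [hsplit, sum_insert (by simp [facilitiesUpTo]; omega), hI.sum_capacity (by omega),
        add_comm]
    have := hI.card_level_le r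
    have := hI.c_last_pos
    omega

theorem homeOrNext_of_forall_lt (hI : IsLevelInstance k lvl I) (hchain : ChainOfLevels lvl σ)
    (hS : IsSDWithOrder I σ S) (t : Fin n) (ih : ∀ s < t, HomeOrNext lvl S (σ s)) :
    HomeOrNext lvl S (σ t) := by
  by_cases hhome : 0 < (lvl (σ t) : ℕ) ∧
      load σ S (lvl (σ t)).castSucc t < I.c (lvl (σ t)).castSucc
  · have hd := hS.2 t _ hhome.2
    rw [hI.dist_home _ hhome.1] at hd
    have hSt : (S (σ t) : ℕ) = lvl (σ t) :=
      not_ne_iff.1 fun hne => (hI.dist_pos_of_ne _ hne).not_ge hd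
    exact ⟨hSt ▸ hhome.1, hSt.ge, by omega⟩
  · have hsat : SaturatedUpTo I σ S t (lvl (σ t)) :=
      hI.saturatedUpTo_of_capacity_le_load hS ih (lvl (σ t)).castSucc (by simp) (σ t) rfl
        (by simp) fun h0 => not_lt.1 fun hfree => hhome ⟨by simpa using h0, hfree⟩
    have hd := (hS.2 t _ (hI.load_lt_capacity_succ hchain ih hsat)).trans_eq (hI.dist_next _)
    obtain ⟨h0, hle⟩ := hI.pos_and_le_of_dist_le _ hd
    refine ⟨h0, not_lt.1 fun hlt => ?_, hle⟩
    exact (hsat _ h0 hlt.le).not_gt (hS.load_lt_capacity t)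

theorem homeOrNext (hI : IsLevelInstance k lvl I) (hchain : ChainOfLevels lvl σ)
    (hS : IsSDWithOrder I σ S) (a : Fin n) : HomeOrNext lvl S a := by
  have key (t : Fin n) : HomeOrNext lvl S (σ t) :=
    WellFoundedLT.induction t (hI.homeOrNext_of_forall_lt hchain hS)
  simpa using key (σ.symm a)

theorem exists_level_assigned_next (hI : IsLevelInstance k lvl I)
    (hgood : ∀ a, HomeOrNext lvl S a) (hvalid : ValidAssignment I S) {i : ℕ} (hi : i < k) :
    ∃ a, (lvl a : ℕ) = i ∧ (S a : ℕ) = i + 1 := by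
  by_contra! hno
  have hsub : ({a | (lvl a : ℕ) ≤ i} : Finset (Fin n)) ⊆
      ({a | S a ∈ facilitiesUpTo (k + 1) i} : Finset (Fin n)) := by
    intro a ha
    have hne := hno a
    have hgood := hgood a
    simp only [HomeOrNext, facilitiesUpTo, mem_filter, mem_univ, true_and] at ha hgood ⊢
    omega
  have hle := (card_le_card hsub).trans (hvalid.card_le_sum_capacity _)
  rw [hI.sum_capacity hi, hI.card_level_le] at hle
  omega

theorem two_pow_sub_one_le_socialCost (hI : IsLevelInstance k lvl I)
    (hnext : ∀ i < k, ∃ a, (lvl a : ℕ) = i ∧ (S a : ℕ) = i + 1) :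
    (2 : ℝ) ^ k - 1 ≤ socialCost I S := by
  choose w hwl hwS using fun i : Fin k => hnext i i.isLt
  have hw : Function.Injective w := fun i j h => Fin.ext (by rw [← hwl i, ← hwl j, h])
  have hdist (i : Fin k) : dist (I.A (w i)) (I.F (S (w i))) = 2 ^ (i : ℕ) := by
    rw [show S (w i) = (lvl (w i)).succ from Fin.ext (by simp [hwS, hwl]), hI.dist_next, hwl]
  calc (2 : ℝ) ^ k - 1 = ∑ i : Fin k, (2 : ℝ) ^ (i : ℕ) := by
        rw [Fin.sum_univ_eq_sum_range (fun i => (2 : ℝ) ^ i), geom_sum_eq (by norm_num)]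
        norm_num
    _ = ∑ a ∈ univ.image w, dist (I.A a) (I.F (S a)) := by
        rw [sum_image fun i _ j _ h => hw h]
        exact sum_congr rfl fun i _ => (hdist i).symm
    _ ≤ socialCost I S :=
        sum_le_sum_of_subset_of_nonneg (subset_univ _) fun _ _ _ => dist_nonneg

end IsLevelInstance

theorem sd_chain_of_levels_instance_general (k : ℕ) (ε : ℝ) (hε : 0 < ε)
    {n : ℕ} (lvl : Fin n → Fin k)
    (hl0 : (Finset.univ.filter (fun a : Fin n => (lvl a : ℕ) = 0)).card = 1)
    (hli : ∀ i : Fin k, 0 < (i : ℕ) →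
      (Finset.univ.filter (fun a : Fin n => lvl a = i)).card = 1 + 2 * 3 ^ ((i : ℕ) - 1))
    (I : FAInstance ℝ n (k + 1))
    (hA : ∀ a : Fin n, I.A a = if (lvl a : ℕ) = 0 then 1 else 2 ^ (lvl a : ℕ))
    (hF0 : I.F 0 = -ε)
    (hFi : ∀ j : Fin (k + 1), 0 < (j : ℕ) → I.F j = 2 ^ (j : ℕ))
    (hck : I.c (Fin.last k) = 1)
    (hci : ∀ j : Fin (k + 1), 0 < (j : ℕ) → (j : ℕ) < k →
      I.c j = 1 + 2 * 3 ^ ((j : ℕ) - 1))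
    (σ : Equiv.Perm (Fin n)) (hchain : ChainOfLevels lvl σ)
    (S : Fin n → Fin (k + 1)) (hS : IsSDWithOrder I σ S) :
    (∀ i : ℕ, i < k → ∃ a : Fin n, (lvl a : ℕ) = i ∧ (S a : ℕ) = i + 1) ∧
    (2 : ℝ) ^ k - 1 ≤ socialCost I S := by
  have hI : IsLevelInstance k lvl I :=
    { A_eq := fun a => by rw [hA a]; split_ifs with h <;> simp [h]
      F_zero_neg := by linarith
      F_eq := hFi
      card_level_zero := hl0
      c_eq_card := fun j hj0 hjk => by
        rw [hci j hj0 hjk, ← hli ⟨j, hjk⟩ hj0]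
        simp [Fin.ext_iff]
      c_last_pos := by omega }
  have hnext := fun i (hi : i < k) =>
    hI.exists_level_assigned_next (hI.homeOrNext hchain hS) hS.1 hi
  exact ⟨hnext, hI.two_pow_sub_one_le_socialCost hnext⟩

/-- On the lower-bound instance on the real line — facility of level 0 at `−ε` with
capacity 1, facility of level `i` (`1 ≤ i ≤ k − 1`) at `2 ^ i` with capacity
`1 + 2 · 3 ^ (i − 1)`, facility of level `k` at `2 ^ k` with capacity 1, one agent of
level 0 at `1` and `1 + 2 · 3 ^ (i − 1)` agents of level `i` at `2 ^ i` — if Serial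
Dictatorship is run with an ordering having the chain-of-levels property, then for each
`i < k` at least one agent of level `i` is assigned to the facility of level `i + 1`,
and the resulting social cost is at least `2 ^ k − 1`. -/
theorem sd_chain_of_levels_instance (k : ℕ) (hk : 0 < k) (ε : ℝ) (hε : 0 < ε)
    {n : ℕ} (lvl : Fin n → Fin k)
    (hl0 : (Finset.univ.filter (fun a : Fin n => (lvl a : ℕ) = 0)).card = 1)
    (hli : ∀ i : Fin k, 0 < (i : ℕ) →
      (Finset.univ.filter (fun a : Fin n => lvl a = i)).card = 1 + 2 * 3 ^ ((i : ℕ) - 1))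
    (I : FAInstance ℝ n (k + 1))
    (hA : ∀ a : Fin n, I.A a = if (lvl a : ℕ) = 0 then 1 else 2 ^ (lvl a : ℕ))
    (hF0 : I.F 0 = -ε)
    (hFi : ∀ j : Fin (k + 1), 0 < (j : ℕ) → I.F j = 2 ^ (j : ℕ))
    (hc0 : I.c 0 = 1)
    (hck : I.c (Fin.last k) = 1)
    (hci : ∀ j : Fin (k + 1), 0 < (j : ℕ) → (j : ℕ) < k →
      I.c j = 1 + 2 * 3 ^ ((j : ℕ) - 1))
    (σ : Equiv.Perm (Fin n)) (hchain : ChainOfLevels lvl σ)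
    (S : Fin n → Fin (k + 1)) (hS : IsSDWithOrder I σ S) :
    (∀ i : ℕ, i < k → ∃ a : Fin n, (lvl a : ℕ) = i ∧ (S a : ℕ) = i + 1) ∧
    (2 : ℝ) ^ k - 1 ≤ socialCost I S :=
  sd_chain_of_levels_instance_general k ε hε lvl hl0 hli I hA hF0 hFi hck hci σ hchain S hS
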